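/- (General non-stabilizability criterion, hitting-time form.) Suppose there exists α ∈ ℝ^M with α ≠ 0 such that α is orthogonal to the drift of every action: α⋅Δ_a = 0 for every a ∈ 𝒜. Then for every policy 𝒫, every realization (X_n) of the induced chain started at a state x ∈ ℤ₊^M, and every state y ∈ ℤ₊^M with α⋅x ≠ α⋅y, the hitting time T_y = inf{n ≥ 0 : X_n = y} has infinite expectation: E[T_y] = ∞. -/

import Mathlib

open MeasureTheory
open scoped ENNReal

/-- The `i`-th standard basis vector of `ℤ^M`. -/
def stdZ (M : ℕ) (i : Fin M) : Fin M → ℤ := fun k => if k = i then 1 else 0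

/-- The support of each step distribution `P̃ₐ` consists only of vectors of the form
`eᵢ`, `-eᵢ`, or `eᵢ - eⱼ` with `i ≠ j`. -/
def QueueSupport (M : ℕ) {A : Type} (Ptil : A → PMF (Fin M → ℤ)) : Prop :=
  ∀ a : A, ∀ d ∈ (Ptil a).support,
    (∃ i, d = stdZ M i) ∨ (∃ i, d = -stdZ M i) ∨
    (∃ i j, i ≠ j ∧ d = stdZ M i - stdZ M j)

/-- The drift vector `Δₐ = ∑_d d ⬝ P̃ₐ(d) ∈ ℝ^M` of action `a`. -/
noncomputable def drift (M : ℕ) {A : Type} (Ptil : A → PMF (Fin M → ℤ)) (a : A) :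
    Fin M → ℝ :=
  fun k => ∑' d : Fin M → ℤ, ((Ptil a) d).toReal * (d k : ℝ)

/-- The allowed actions keep the state in `ℤ₊^M`: from state `z`, any displacement `d`
in the support of an allowed action leads to a nonnegative state. -/
def StateConsistent (M : ℕ) {A : Type} (Ptil : A → PMF (Fin M → ℤ))
    (Act : (Fin M → ℕ) → Set A) : Prop :=
  ∀ z : Fin M → ℕ, ∀ a ∈ Act z, ∀ d ∈ (Ptil a).support, ∀ k, (0 : ℤ) ≤ (z k : ℤ) + d k

/-- Transition probabilities of the chain induced by the policy `pol`:
`p (z, z + d) = P̃_{pol z} (d)`. -/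
noncomputable def hcqnTrans (M : ℕ) {A : Type} (Ptil : A → PMF (Fin M → ℤ))
    (pol : (Fin M → ℕ) → A) (z z' : Fin M → ℕ) : ℝ :=
  ((Ptil (pol z)) (fun k => (z' k : ℤ) - (z k : ℤ))).toReal

/-- `X` is a realization of a Markov chain with one-step transition probabilities `p`
on the filtered probability space `(Ω, ℱ, μ)`: it is adapted, and almost surely on
`{X n = z}`, the conditional probability given `ℱ n` that `X (n+1) = z'` equals `p z z'`. -/
def IsRealization {Ω : Type} {S : Type} [MeasurableSpace S] {mΩ : MeasurableSpace Ω}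
    (μ : Measure Ω) (ℱ : Filtration ℕ mΩ) (X : ℕ → Ω → S) (p : S → S → ℝ) : Prop :=
  (∀ n, Measurable[ℱ n] (X n)) ∧
  ∀ (n : ℕ) (z z' : S), ∀ᵐ ω ∂μ, X n ω = z →
    (μ[Set.indicator {ω' | X (n + 1) ω' = z'} (fun _ => (1 : ℝ)) | ℱ n]) ω = p z z'

/-- The hitting time of the state `y` by the process `X`, as an extended nonnegative
real number; it equals `∞` on the event that `y` is never hit. -/
noncomputable def hitTime {Ω S : Type*} (X : ℕ → Ω → S) (y : S) (ω : Ω) : ℝ≥0∞ :=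
  sInf {t : ℝ≥0∞ | ∃ n : ℕ, X n ω = y ∧ (n : ℝ≥0∞) = t}

/-!
The linear functional `f z = α ⬝ z` is harmonic for the chain, because every action has zero
drift in direction `α`, so `f (X n)` is a martingale; its increments are bounded by `∑ |α k|`
since every step moves the state by a vector with entries in `{-1, 0, 1}`. If the hitting time
`T` of `y` had finite mean, optional stopping would give `α ⬝ y = E[f (X T)] = E[f (X 0)] = α ⬝ x`:
the stopped values `f (X (min n T))` are dominated by `|f x| + T ∑ |α k|`, which is integrable.
-/

open Filter

section OptionalStopping

variable {Ω : Type*} {m : MeasurableSpace Ω} {μ : Measure Ω} {ℱ : Filtration ℕ m}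

theorem MeasureTheory.IsStoppingTime.measurable_of_nat {τ : Ω → ℕ∞} (hτ : IsStoppingTime ℱ τ) :
    Measurable τ := by
  refine measurable_to_countable' fun x => ?_
  induction x using ENat.recTopCoe with
  | top =>
    have h : τ ⁻¹' {⊤} = (⋃ n : ℕ, τ ⁻¹' {(n : ℕ∞)})ᶜ := by
      ext ω; simp [ENat.eq_top_iff_forall_ne, eq_comm]
    rw [h]
    exact (MeasurableSet.iUnion fun n => ℱ.le n _ (hτ.measurableSet_eq n)).compl
  | coe n => exact ℱ.le n _ (hτ.measurableSet_eq n)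

theorem MeasureTheory.IsStoppingTime.ae_ne_top {τ : Ω → ℕ∞} (hτ : IsStoppingTime ℱ τ)
    (hτint : ∫⁻ ω, (τ ω : ℝ≥0∞) ∂μ ≠ ∞) : ∀ᵐ ω ∂μ, τ ω ≠ ⊤ :=
  (ae_lt_top ((measurable_of_countable _).comp hτ.measurable_of_nat) hτint).mono
    fun ω h => by simpa using h.ne

theorem abs_sub_zero_le_mul_of_abs_sub_succ_le {u : ℕ → ℝ} {C : ℝ}
    (h : ∀ n, |u (n + 1) - u n| ≤ C) (n : ℕ) : |u n - u 0| ≤ C * n := by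
  induction n with
  | zero => simp
  | succ n ih =>
    calc |u (n + 1) - u 0| ≤ |u (n + 1) - u n| + |u n - u 0| := abs_sub_le _ _ _
      _ ≤ C + C * n := add_le_add (h n) ih
      _ = C * (n + 1 : ℕ) := by push_cast; ring

theorem integrable_of_abs_sub_succ_le [IsFiniteMeasure μ] {Y : ℕ → Ω → ℝ} {C : ℝ}
    (hY0 : Integrable (Y 0) μ) (hYm : ∀ n, AEStronglyMeasurable (Y n) μ)
    (hinc : ∀ᵐ ω ∂μ, ∀ n, |Y (n + 1) ω - Y n ω| ≤ C) (n : ℕ) : Integrable (Y n) μ := by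
  induction n with
  | zero => exact hY0
  | succ n ih =>
    have hdiff : Integrable (Y (n + 1) - Y n) μ :=
      Integrable.of_bound ((hYm (n + 1)).sub (hYm n)) C
        (hinc.mono fun ω hω => hω n)
    simpa using hdiff.add ih

theorem MeasureTheory.Martingale.integral_stoppedProcess [SigmaFiniteFiltration μ ℱ]
    {Y : ℕ → Ω → ℝ} (hY : Martingale Y ℱ μ) {τ : Ω → ℕ∞} (hτ : IsStoppingTime ℱ τ) (n : ℕ) :
    ∫ ω, stoppedProcess Y τ n ω ∂μ = ∫ ω, Y 0 ω ∂μ := by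
  have hle : ∀ Z : ℕ → Ω → ℝ, Submartingale Z ℱ μ →
      ∫ ω, Z 0 ω ∂μ ≤ ∫ ω, stoppedProcess Z τ n ω ∂μ := fun Z hZ =>
    stoppedValue_const Z 0 ▸ hZ.expected_stoppedValue_mono (isStoppingTime_const ℱ 0)
      ((isStoppingTime_const ℱ n).min hτ) (fun ω => bot_le) (N := n) fun ω => min_le_left _ _
  have h₂ : ∫ ω, -Y 0 ω ∂μ ≤ ∫ ω, -(stoppedProcess Y τ n ω) ∂μ := hle (-Y) hY.neg.submartingale
  rw [integral_neg, integral_neg] at h₂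
  linarith [hle Y hY.submartingale]

theorem MeasureTheory.Martingale.integral_stoppedValue_eq_of_lintegral_ne_top [IsFiniteMeasure μ]
    {Y : ℕ → Ω → ℝ} (hY : Martingale Y ℱ μ) {τ : Ω → ℕ∞} (hτ : IsStoppingTime ℱ τ)
    (hτint : ∫⁻ ω, (τ ω : ℝ≥0∞) ∂μ ≠ ∞) {C : ℝ} (hinc : ∀ᵐ ω ∂μ, ∀ n, |Y (n + 1) ω - Y n ω| ≤ C) :
    ∫ ω, stoppedValue Y τ ω ∂μ = ∫ ω, Y 0 ω ∂μ := by
  set Z := stoppedProcess Y τ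
  have hZ : ∀ ω (t : ℕ), τ ω = t → ∀ n, Z n ω = Y (min n t) ω := fun ω t ht n => by
    change Y (min (n : ℕ∞) (τ ω)).untopA ω = _
    rw [ht]
    rfl
  have hτm : Measurable fun ω => (τ ω : ℝ≥0∞) :=
    (measurable_of_countable _).comp hτ.measurable_of_nat
  have hfin := hτ.ae_ne_top hτint
  have hbound : Integrable (fun ω => |Y 0 ω| + C * (τ ω : ℝ≥0∞).toReal) μ :=
    (hY.integrable 0).abs.add
      ((integrable_toReal_of_lintegral_ne_top hτm.aemeasurable hτint).const_mul C)
  have hdom : ∀ n, ∀ᵐ ω ∂μ, ‖Z n ω‖ ≤ |Y 0 ω| + C * (τ ω : ℝ≥0∞).toReal := fun n => by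
    filter_upwards [hinc, hfin] with ω hω hωτ
    obtain ⟨t, ht⟩ := ENat.ne_top_iff_exists.1 hωτ
    have hC : 0 ≤ C := (abs_nonneg _).trans (hω 0)
    have hk := abs_sub_zero_le_mul_of_abs_sub_succ_le (u := fun k => Y k ω) hω (min n t)
    have hkt : C * (min n t : ℕ) ≤ C * t := mul_le_mul_of_nonneg_left (by simp) hC
    rw [hZ ω t ht.symm, Real.norm_eq_abs, ← ht, ENat.toENNReal_coe, ENNReal.toReal_natCast]
    linarith [abs_sub_abs_le_abs_sub (Y (min n t) ω) (Y 0 ω)]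
  have hconv : ∀ᵐ ω ∂μ, Tendsto (fun n => Z n ω) atTop (nhds (stoppedValue Y τ ω)) := by
    filter_upwards [hfin] with ω hωτ
    obtain ⟨t, ht⟩ := ENat.ne_top_iff_exists.1 hωτ
    refine tendsto_atTop_of_eventually_const (i₀ := t) fun n hn => ?_
    rw [hZ ω t ht.symm, min_eq_right hn]
    change _ = Y (τ ω).untopA ω
    rw [← ht]
    rfl
  have hZm : ∀ n, AEStronglyMeasurable (Z n) μ := fun n =>
    (hY.stronglyAdapted.stronglyMeasurable_stoppedProcess_of_discrete hτ n).aestronglyMeasurable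
  have hlim := tendsto_integral_of_dominated_convergence _ hZm hbound hdom hconv
  exact tendsto_nhds_unique (hlim.congr (hY.integral_stoppedProcess hτ)) tendsto_const_nhds

end OptionalStopping

theorem PMF.summable_toReal_mul {β : Type*} {q : PMF β} (hq : q.support.Finite) (F : β → ℝ) :
    Summable fun b => (q b).toReal * F b :=
  summable_of_hasFiniteSupport <| hq.subset fun _ hb =>
    (PMF.mem_support_iff _ _).2 fun h => left_ne_zero_of_mul hb (by rw [h, ENNReal.toReal_zero])

theorem PMF.tsum_toReal {β : Type*} (q : PMF β) : ∑' b, (q b).toReal = 1 := by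
  rw [← ENNReal.tsum_toReal_eq q.apply_ne_top, q.tsum_coe, ENNReal.toReal_one]

theorem hitTime_eq_hittingAfter {Ω S : Type*} (X : ℕ → Ω → S) (y : S) (ω : Ω) :
    hitTime X y ω = ENat.toENNReal (hittingAfter X {y} 0 ω) := by
  classical
  simp only [hitTime, hittingAfter_def, zero_le, true_and, Set.mem_singleton_iff]
  split_ifs with h
  · change _ = ((sInf {j | X j ω = y} : ℕ) : ℝ≥0∞)
    refine le_antisymm (sInf_le ⟨_, Nat.sInf_mem h, rfl⟩) (le_sInf ?_)
    rintro _ ⟨n, hn, rfl⟩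
    exact Nat.cast_le.2 (Nat.sInf_le hn)
  · change _ = ⊤
    rw [sInf_eq_top]
    rintro _ ⟨n, hn, -⟩
    exact absurd ⟨n, hn⟩ h

namespace IsRealization

variable {Ω S : Type} [MeasurableSpace S] {mΩ : MeasurableSpace Ω} {μ : Measure Ω}
  {ℱ : Filtration ℕ mΩ} {X : ℕ → Ω → S} {p : S → S → ℝ}

theorem measurable (hX : IsRealization μ ℱ X p) (n : ℕ) : Measurable (X n) :=
  (hX.1 n).mono (ℱ.le n) le_rfl

variable [MeasurableSingletonClass S]

theorem measureReal_inter_eq [IsFiniteMeasure μ] (hX : IsRealization μ ℱ X p) {n : ℕ}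
    {z : S} {A : Set Ω} (hA : MeasurableSet[ℱ n] A) (hAz : ∀ ω ∈ A, X n ω = z) (z' : S) :
    μ.real (A ∩ {ω | X (n + 1) ω = z'}) = p z z' * μ.real A := by
  have hB : MeasurableSet {ω | X (n + 1) ω = z'} :=
    hX.measurable (n + 1) (measurableSet_singleton z')
  have hint : Integrable ({ω | X (n + 1) ω = z'}.indicator fun _ => (1 : ℝ)) μ :=
    (integrable_const 1).indicator hB
  calc μ.real (A ∩ {ω | X (n + 1) ω = z'})
      = ∫ ω in A, {ω | X (n + 1) ω = z'}.indicator (fun _ => (1 : ℝ)) ω ∂μ := by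
        rw [integral_indicator hB, Measure.restrict_restrict hB, setIntegral_const, smul_eq_mul,
          mul_one, Set.inter_comm]
    _ = ∫ ω in A, (μ[{ω | X (n + 1) ω = z'}.indicator fun _ => (1 : ℝ) | ℱ n]) ω ∂μ :=
        (setIntegral_condExp (ℱ.le n) hint hA).symm
    _ = ∫ _ in A, p z z' ∂μ := by
        refine setIntegral_congr_ae ((ℱ.le n) _ hA) ?_
        filter_upwards [hX.2 n z z'] with ω hω hωA using hω (hAz ω hωA)
    _ = p z z' * μ.real A := by rw [setIntegral_const, smul_eq_mul, mul_comm]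

theorem ae_trans_ne_zero [Countable S] [IsFiniteMeasure μ] (hX : IsRealization μ ℱ X p) :
    ∀ᵐ ω ∂μ, ∀ n, p (X n ω) (X (n + 1) ω) ≠ 0 := by
  rw [ae_all_iff]
  intro n
  rw [ae_iff]
  have hnull : ∀ q : {q : S × S // p q.1 q.2 = 0},
      μ ({ω | X n ω = q.1.1} ∩ {ω | X (n + 1) ω = q.1.2}) = 0 := by
    rintro ⟨⟨z, z'⟩, hq⟩
    have h := hX.measureReal_inter_eq (hX.1 n (measurableSet_singleton z)) (fun _ h => h) z'
    rwa [hq, zero_mul, measureReal_eq_zero_iff] at h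
  refine measure_mono_null (fun ω hω => ?_) (measure_iUnion_null hnull)
  exact Set.mem_iUnion.2 ⟨⟨(X n ω, X (n + 1) ω), not_not.1 hω⟩, rfl, rfl⟩

theorem setIntegral_comp_succ [Countable S] [IsFiniteMeasure μ] (hX : IsRealization μ ℱ X p)
    {f : S → ℝ} {n : ℕ} (hint : Integrable (fun ω => f (X (n + 1) ω)) μ) {z : S} {A : Set Ω}
    (hA : MeasurableSet[ℱ n] A) (hAz : ∀ ω ∈ A, X n ω = z) :
    ∫ ω in A, f (X (n + 1) ω) ∂μ = (∑' z', p z z' * f z') * μ.real A := by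
  have hB : ∀ z', MeasurableSet (A ∩ {ω | X (n + 1) ω = z'}) := fun z' =>
    (ℱ.le n _ hA).inter (hX.measurable (n + 1) (measurableSet_singleton z'))
  have hdisj : Pairwise (Function.onFun Disjoint fun z' => A ∩ {ω | X (n + 1) ω = z'}) :=
    fun z₁ z₂ hne => (pairwise_disjoint_fiber (X (n + 1)) hne).mono
      Set.inter_subset_right Set.inter_subset_right
  have hA_eq : A = ⋃ z', A ∩ {ω | X (n + 1) ω = z'} := by
    ext ω; simp
  have hsum := hasSum_integral_iUnion hB hdisj hint.integrableOn
  rw [← hA_eq] at hsum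
  rw [← hsum.tsum_eq, ← tsum_mul_right]
  refine tsum_congr fun z' => ?_
  calc ∫ ω in A ∩ {ω | X (n + 1) ω = z'}, f (X (n + 1) ω) ∂μ
      = ∫ _ in A ∩ {ω | X (n + 1) ω = z'}, f z' ∂μ :=
        setIntegral_congr_fun (hB z') fun ω hω => congrArg f hω.2
    _ = p z z' * f z' * μ.real A := by
        rw [setIntegral_const, hX.measureReal_inter_eq hA hAz, smul_eq_mul]; ring

theorem martingale_comp [Countable S] [IsFiniteMeasure μ] (hX : IsRealization μ ℱ X p)
    {f : S → ℝ} (hf : ∀ z, ∑' z', p z z' * f z' = f z)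
    (hint : ∀ n, Integrable (fun ω => f (X n ω)) μ) :
    Martingale (fun n ω => f (X n ω)) ℱ μ := by
  refine martingale_of_setIntegral_eq_succ
    (fun n => ((measurable_of_countable f).comp (hX.1 n)).stronglyMeasurable) hint
    fun n s hs => ?_
  have hC : ∀ z, MeasurableSet[ℱ n] (s ∩ {ω | X n ω = z}) :=
    fun z => hs.inter (hX.1 n (measurableSet_singleton z))
  have hdisj : Pairwise (Function.onFun Disjoint fun z => s ∩ {ω | X n ω = z}) :=
    fun z₁ z₂ hne => (pairwise_disjoint_fiber (X n) hne).mono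
      Set.inter_subset_right Set.inter_subset_right
  have hs_eq : s = ⋃ z, s ∩ {ω | X n ω = z} := by
    ext ω; simp
  rw [hs_eq, integral_iUnion (fun z => ℱ.le n _ (hC z)) hdisj (hint n).integrableOn,
    integral_iUnion (fun z => ℱ.le n _ (hC z)) hdisj (hint (n + 1)).integrableOn]
  refine tsum_congr fun z => ?_
  rw [hX.setIntegral_comp_succ (hint (n + 1)) (hC z) fun ω hω => hω.2, hf z,
    setIntegral_congr_fun (ℱ.le n _ (hC z)) fun ω hω => congrArg f hω.2,
    setIntegral_const, smul_eq_mul, mul_comm]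

end IsRealization

variable {M : ℕ} {A : Type} {Ptil : A → PMF (Fin M → ℤ)}

namespace QueueSupport

theorem abs_le_one (hsupp : QueueSupport M Ptil) {a : A} {d : Fin M → ℤ}
    (hd : d ∈ (Ptil a).support) (k : Fin M) : |d k| ≤ 1 := by
  rcases hsupp a d hd with ⟨i, rfl⟩ | ⟨i, rfl⟩ | ⟨i, j, -, rfl⟩ <;>
    simp only [stdZ, Pi.neg_apply, Pi.sub_apply] <;> split_ifs <;> simp

theorem finite_support (hsupp : QueueSupport M Ptil) (a : A) : (Ptil a).support.Finite :=
  (Set.Finite.pi fun _ => Set.finite_Icc (-1 : ℤ) 1).subset fun _ hd =>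
    Set.mem_univ_pi.2 fun k => abs_le.1 (hsupp.abs_le_one hd k)

theorem abs_sum_mul_le (hsupp : QueueSupport M Ptil) {a : A} {d : Fin M → ℤ}
    (hd : d ∈ (Ptil a).support) (α : Fin M → ℝ) :
    |∑ k, α k * (d k : ℝ)| ≤ ∑ k, |α k| := by
  refine (Finset.abs_sum_le_sum_abs _ _).trans (Finset.sum_le_sum fun k _ => ?_)
  rw [abs_mul]
  exact mul_le_of_le_one_right (abs_nonneg _) (by exact_mod_cast hsupp.abs_le_one hd k)

theorem sum_mul_drift (hsupp : QueueSupport M Ptil) (a : A) (α : Fin M → ℝ) :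
    ∑ k, α k * drift M Ptil a k = ∑' d, ((Ptil a) d).toReal * ∑ k, α k * (d k : ℝ) := by
  simp only [drift, Finset.mul_sum, ← tsum_mul_left]
  rw [← Summable.tsum_finsetSum fun k _ => ?_]
  · exact tsum_congr fun d => Finset.sum_congr rfl fun k _ => by ring
  · simpa only [mul_left_comm] using
      (PMF.summable_toReal_mul (hsupp.finite_support a) _).mul_left (α k)

end QueueSupport

section hcqnTrans

variable {pol : (Fin M → ℕ) → A}

theorem sub_mem_support_of_hcqnTrans_ne_zero {z z' : Fin M → ℕ}
    (h : hcqnTrans M Ptil pol z z' ≠ 0) :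
    (fun k => (z' k : ℤ) - z k) ∈ (Ptil (pol z)).support :=
  (PMF.mem_support_iff _ _).2 fun h0 => h (by rw [hcqnTrans, h0, ENNReal.toReal_zero])

theorem abs_sum_mul_sub_le_of_hcqnTrans_ne_zero (hsupp : QueueSupport M Ptil) (α : Fin M → ℝ)
    {z z' : Fin M → ℕ} (h : hcqnTrans M Ptil pol z z' ≠ 0) :
    |∑ k, α k * (z' k : ℝ) - ∑ k, α k * (z k : ℝ)| ≤ ∑ k, |α k| := by
  have hle := hsupp.abs_sum_mul_le (sub_mem_support_of_hcqnTrans_ne_zero h) α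
  rw [← Finset.sum_sub_distrib]
  convert hle using 4 with k
  push_cast
  ring

theorem tsum_hcqnTrans_mul_sum (hsupp : QueueSupport M Ptil) {Act : (Fin M → ℕ) → Set A}
    (hcons : StateConsistent M Ptil Act) (hpol : ∀ z, pol z ∈ Act z) (α : Fin M → ℝ)
    (z : Fin M → ℕ) :
    ∑' z', hcqnTrans M Ptil pol z z' * ∑ k, α k * (z' k : ℝ)
      = ∑ k, α k * (z k : ℝ) + ∑ k, α k * drift M Ptil (pol z) k := by
  set q := Ptil (pol z)
  set g : (Fin M → ℤ) → ℝ := fun d => ∑ k, α k * (d k : ℝ)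
  let e : (Fin M → ℕ) → (Fin M → ℤ) := fun z' k => z' k - z k
  have he : Function.Injective e := fun z₁ z₂ h => funext fun k => by
    have : (z₁ k : ℤ) - z k = z₂ k - z k := congrFun h k
    omega
  have hrange : Function.support (fun d => (q d).toReal * (∑ k, α k * (z k : ℝ) + g d))
      ⊆ Set.range e := fun d hd => by
    have hdq : d ∈ q.support := (PMF.mem_support_iff _ _).2 fun h0 =>
      left_ne_zero_of_mul hd (by rw [h0, ENNReal.toReal_zero])
    refine ⟨fun k => (z k + d k).toNat, funext fun k => ?_⟩
    have := hcons z (pol z) (hpol z) d hdq k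
    simp only [e]
    omega
  have hsum : ∀ F : (Fin M → ℤ) → ℝ, Summable fun d => (q d).toReal * F d :=
    PMF.summable_toReal_mul (hsupp.finite_support (pol z))
  calc ∑' z', hcqnTrans M Ptil pol z z' * ∑ k, α k * (z' k : ℝ)
      = ∑' z', (q (e z')).toReal * (∑ k, α k * (z k : ℝ) + g (e z')) := by
        refine tsum_congr fun z' => ?_
        simp only [hcqnTrans, g, e, q, ← Finset.sum_add_distrib]
        congr 1
        refine Finset.sum_congr rfl fun k _ => ?_
        push_cast
        ring
    _ = ∑' d, (q d).toReal * (∑ k, α k * (z k : ℝ) + g d) := he.tsum_eq hrange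
    _ = (∑' d, (q d).toReal) * (∑ k, α k * (z k : ℝ)) + ∑' d, (q d).toReal * g d := by
        rw [← tsum_mul_right, ← (hsum _).tsum_add (hsum g)]
        exact tsum_congr fun d => by ring
    _ = ∑ k, α k * (z k : ℝ) + ∑ k, α k * drift M Ptil (pol z) k := by
        rw [PMF.tsum_toReal, one_mul, hsupp.sum_mul_drift]

end hcqnTrans

theorem hcqn_hitting_time_infinite_general (M : ℕ) (A : Type)
    (Ptil : A → PMF (Fin M → ℤ)) (hsupp : QueueSupport M Ptil)
    (Act : (Fin M → ℕ) → Set A) (hcons : StateConsistent M Ptil Act) (α : Fin M → ℝ)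
    (hdrift : ∀ a : A, ∑ k, α k * drift M Ptil a k = 0)
    (pol : (Fin M → ℕ) → A) (hpol : ∀ z, pol z ∈ Act z)
    {Ω : Type} {mΩ : MeasurableSpace Ω} (μ : Measure Ω) [IsProbabilityMeasure μ]
    (ℱ : Filtration ℕ mΩ) (X : ℕ → Ω → (Fin M → ℕ))
    (x : Fin M → ℕ) (hX0 : ∀ᵐ ω ∂μ, X 0 ω = x)
    (hX : IsRealization μ ℱ X (hcqnTrans M Ptil pol))
    (y : Fin M → ℕ) (hxy : ∑ k, α k * (x k : ℝ) ≠ ∑ k, α k * (y k : ℝ)) :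
    ∫⁻ ω, hitTime X y ω ∂μ = ⊤ := by
  set f : (Fin M → ℕ) → ℝ := fun z => ∑ k, α k * (z k : ℝ)
  set τ : Ω → ℕ∞ := hittingAfter X {y} 0
  have hτ : IsStoppingTime ℱ τ :=
    Adapted.isStoppingTime_hittingAfter hX.1 (measurableSet_singleton y)
  have hinc : ∀ᵐ ω ∂μ, ∀ n, |f (X (n + 1) ω) - f (X n ω)| ≤ ∑ k, |α k| :=
    hX.ae_trans_ne_zero.mono fun ω h n => abs_sum_mul_sub_le_of_hcqnTrans_ne_zero hsupp α (h n)
  have hf0 : (fun ω => f (X 0 ω)) =ᵐ[μ] fun _ => f x := hX0.mono fun ω h => congrArg f h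
  have hint : ∀ n, Integrable (fun ω => f (X n ω)) μ :=
    integrable_of_abs_sub_succ_le ((integrable_const (f x)).congr hf0.symm)
      (fun n => ((measurable_of_countable f).comp (hX.measurable n)).aestronglyMeasurable) hinc
  have hmart : Martingale (fun n ω => f (X n ω)) ℱ μ := hX.martingale_comp
    (fun z => by rw [tsum_hcqnTrans_mul_sum hsupp hcons hpol α z, hdrift, add_zero]) hint
  by_contra hT
  simp_rw [hitTime_eq_hittingAfter] at hT
  have hstop := hmart.integral_stoppedValue_eq_of_lintegral_ne_top hτ hT hinc
  refine hxy ?_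
  calc f x = ∫ ω, f (X 0 ω) ∂μ := by simp [integral_congr_ae hf0]
    _ = ∫ ω, stoppedValue (fun n ω => f (X n ω)) τ ω ∂μ := hstop.symm
    _ = ∫ _, f y ∂μ := integral_congr_ae <| (hτ.ae_ne_top hT).mono fun ω h =>
        congrArg f (Set.mem_singleton_iff.1 (hittingAfter_mem_set_of_ne_top h))
    _ = f y := by simp

/-- General non-stabilizability criterion, hitting-time form: if `α ≠ 0` is orthogonal to
the drift of every action, then for every policy, every realization of the induced chain
started at `x`, and every state `y` with `α ⬝ x ≠ α ⬝ y`, the hitting time of `y` has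
infinite expectation. -/
theorem hcqn_hitting_time_infinite (M : ℕ) (hM : 1 ≤ M)
    (A : Type) [Fintype A] [Nonempty A]
    (Ptil : A → PMF (Fin M → ℤ)) (hsupp : QueueSupport M Ptil)
    (Act : (Fin M → ℕ) → Set A) (hnonempty : ∀ z, (Act z).Nonempty)
    (hcons : StateConsistent M Ptil Act)
    (α : Fin M → ℝ) (hα : α ≠ 0)
    (hdrift : ∀ a : A, ∑ k, α k * drift M Ptil a k = 0)
    (pol : (Fin M → ℕ) → A) (hpol : ∀ z, pol z ∈ Act z)
    {Ω : Type} {mΩ : MeasurableSpace Ω} (μ : Measure Ω) [IsProbabilityMeasure μ]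
    (ℱ : Filtration ℕ mΩ) (X : ℕ → Ω → (Fin M → ℕ))
    (x : Fin M → ℕ) (hX0 : ∀ᵐ ω ∂μ, X 0 ω = x)
    (hX : IsRealization μ ℱ X (hcqnTrans M Ptil pol))
    (y : Fin M → ℕ) (hxy : ∑ k, α k * (x k : ℝ) ≠ ∑ k, α k * (y k : ℝ)) :
    ∫⁻ ω, hitTime X y ω ∂μ = ⊤ :=
  hcqn_hitting_time_infinite_general M A Ptil hsupp Act hcons α hdrift pol hpol μ ℱ X x hX0 hX y hxy
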